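/- arXiv:2510.11453 — 4 statements merged into one kernel-verified Lean document; each statement's English description precedes it below -/
import Mathlib

section
/- Gaussian bound on f_s(L_q): Let f(x) = exp(−πx²) be the Gaussian, extended multiplicatively to ℝ², with f_s(x) := f(x/s). Let r₀ := √(ln 4/π). For any real s and positive integer q with r₀ < s < q/r₀, it holds that 1/f_s(L_q) > (√2/s)·E_q(s)², where L_q := ∪_{z∈ℤ}((z,z) + qℤ²), E(r) := 1 − 2exp(−πr²/2), and E_q(s) := √(E(q/s)·E(s)). -/
noncomputable section

/-- The Gaussian function `f(x) = exp(-πx²)`. -/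
def gauss (x : ℝ) : ℝ := Real.exp (-(Real.pi * x ^ 2))

/-- The lattice `L_q = ∪_{z∈ℤ} ((z,z) + qℤ²) ⊂ ℝ²`. -/
def LqSet (q : ℕ) : Set (ℝ × ℝ) :=
  {v | ∃ z w₁ w₂ : ℤ, v.1 = z + q * w₁ ∧ v.2 = z + q * w₂}

/-- `f_s(L_q)`: the sum over `L_q` of the multiplicative extension of `f` to `ℝ²`,
scaled by `s` (i.e. `f_s(x) = f(x/s)`). -/
def fsLq (f : ℝ → ℝ) (s : ℝ) (q : ℕ) : ℝ :=
  ∑' v : LqSet q, f ((v : ℝ × ℝ).1 / s) * f ((v : ℝ × ℝ).2 / s)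

/-- `r₀ = √(ln 4/π)`. -/
def r₀ : ℝ := Real.sqrt (Real.log 4 / Real.pi)

/-- The "fudge factor" `E(r) = 1 − 2exp(−πr²/2)`. -/
def Eg (r : ℝ) : ℝ := 1 - 2 * Real.exp (-(Real.pi * r ^ 2) / 2)

/-- `E_q(s) = √(E(q/s)·E(s))`. -/
def Egq (q : ℕ) (s : ℝ) : ℝ := Real.sqrt (Eg (q / s) * Eg s)

/-!
Parametrize `L_q` by `(k, a) ↦ (a, a + qk)` and complete the square:
`a² + (a + qk)² = (qk)²/2 + (2a + qk)²/2`, so with `θ(u) = ∑ₙ exp(-πun²)`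
the row `k` of `f_s(L_q)` is `exp(-π(qk/s)²/2)` times a sum of `exp(-π(2a + qk)²/(2s²))` over
one coset of `2ℤ`. By Poisson summation `θ(u) ≤ 2θ(4u)`, so the odd coset never outweighs the
even one and every row sum is at most `θ(2/s²) = (s/√2)·θ(s²/2)`; hence
`f_s(L_q) ≤ (s/√2)·θ((q/s)²/2)·θ(s²/2)`. Finally, with `x = exp(-πr²/2)`, comparing with
`∑ₙ x^|n|` gives `θ(r²/2) ≤ (1 + x)/(1 - x) < 1/(1 - 2x) = 1/E(r)` as soon as `x < 1/2`,
which is exactly `r > r₀`.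
-/

open Real

theorem HasSum.int_even_add_odd {M : Type*} [AddCommMonoid M] [TopologicalSpace M]
    [ContinuousAdd M] {f : ℤ → M} {a b : M} (he : HasSum (fun k => f (2 * k)) a)
    (ho : HasSum (fun k => f (2 * k + 1)) b) : HasSum f (a + b) := by
  have h2 := mul_right_injective₀ (two_ne_zero' ℤ)
  refine (h2.hasSum_range_iff.2 he).add_isCompl ?_
    (((add_left_injective 1).comp h2).hasSum_range_iff.2 ho)
  simpa [Function.comp_def] using Int.isCompl_even_odd

theorem hasSum_pow_natAbs {x : ℝ} (hx₀ : 0 ≤ x) (hx₁ : x < 1) :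
    HasSum (fun n : ℤ => x ^ n.natAbs) ((1 + x) / (1 - x)) := by
  have hgeom := hasSum_geometric_of_lt_one hx₀ hx₁
  have hneg : ∀ n : ℕ, (-((n : ℤ) + 1)).natAbs = n + 1 := fun n => by omega
  convert hgeom.of_nat_of_neg_add_one (f := fun n : ℤ => x ^ n.natAbs)
    (by simpa only [hneg, pow_succ'] using hgeom.mul_left x) using 1
  field_simp [(sub_pos.2 hx₁).ne']

theorem summable_prod_of_tsum_le {α β : Type*} {F : α × β → ℝ} (hF : 0 ≤ F) {g : α → ℝ}
    (hg : Summable g) (hF_sum : ∀ a, Summable fun b => F (a, b))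
    (hF_le : ∀ a, ∑' b, F (a, b) ≤ g a) : Summable F :=
  (summable_prod_of_nonneg hF).2
    ⟨hF_sum, hg.of_nonneg_of_le (fun a => tsum_nonneg fun b => hF (a, b)) hF_le⟩

theorem tsum_prod_le_of_tsum_le {α β : Type*} {F : α × β → ℝ} (hF : 0 ≤ F) {g : α → ℝ}
    (hg : Summable g) (hF_sum : ∀ a, Summable fun b => F (a, b))
    (hF_le : ∀ a, ∑' b, F (a, b) ≤ g a) : ∑' p, F p ≤ ∑' a, g a := by
  have hF_summable := summable_prod_of_tsum_le hF hg hF_sum hF_le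
  rw [hF_summable.tsum_prod' hF_sum]
  exact hF_summable.prod.tsum_le_tsum hF_le hg

namespace GaussianLq

def theta (u : ℝ) : ℝ := ∑' n : ℤ, exp (-π * u * n ^ 2)

theorem summable_exp_neg_mul_int_sq {u : ℝ} (hu : 0 < u) :
    Summable fun n : ℤ => exp (-π * u * n ^ 2) := by
  simpa [mul_assoc] using summable_pow_mul_jacobiTheta₂_term_bound 0 hu 0

theorem theta_nonneg (u : ℝ) : 0 ≤ theta u :=
  tsum_nonneg fun _ => (exp_pos _).le

theorem theta_eq_theta_inv_div_sqrt {u : ℝ} (hu : 0 < u) : theta u = theta u⁻¹ / √u := by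
  rw [theta, theta, Real.tsum_exp_neg_mul_int_sq hu, sqrt_eq_rpow, one_div_mul_eq_div]
  simp only [div_eq_mul_inv]

theorem theta_inv_eq_sqrt_mul_theta {v : ℝ} (hv : 0 < v) : theta v⁻¹ = √v * theta v := by
  rw [theta_eq_theta_inv_div_sqrt hv, mul_div_cancel₀ _ (sqrt_pos.2 hv).ne']

theorem theta_antitoneOn : AntitoneOn theta (Set.Ioi 0) := fun v hv u _ hvu =>
  Summable.tsum_le_tsum (fun n => exp_le_exp.2 <| by
      nlinarith [mul_le_mul_of_nonneg_left (mul_le_mul_of_nonneg_right hvu (sq_nonneg (n : ℝ)))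
        pi_pos.le])
    (summable_exp_neg_mul_int_sq (lt_of_lt_of_le hv hvu)) (summable_exp_neg_mul_int_sq hv)

theorem theta_le_two_mul_theta_four_mul {u : ℝ} (hu : 0 < u) : theta u ≤ 2 * theta (4 * u) := by
  have h4u : 0 < 4 * u := by positivity
  have hsqrt : √(4 * u) = 2 * √u := by
    rw [sqrt_mul (by norm_num), show (4 : ℝ) = 2 ^ 2 by norm_num, sqrt_sq (by norm_num)]
  have hinv : (4 * u)⁻¹ ≤ u⁻¹ := inv_anti₀ hu (by linarith)
  calc theta u = theta u⁻¹ / √u := theta_eq_theta_inv_div_sqrt hu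
    _ ≤ theta (4 * u)⁻¹ / √u := by
      gcongr
      exact theta_antitoneOn (inv_pos.2 h4u) (inv_pos.2 hu) hinv
    _ = 2 * theta (4 * u) := by
      rw [theta_eq_theta_inv_div_sqrt h4u, hsqrt]
      field_simp

theorem hasSum_exp_neg_mul_two_mul_int_sq {u : ℝ} (hu : 0 < u) :
    HasSum (fun k : ℤ => exp (-π * u * ((2 * k : ℤ) : ℝ) ^ 2)) (theta (4 * u)) := by
  rw [theta]
  convert (summable_exp_neg_mul_int_sq (by positivity : 0 < 4 * u)).hasSum using 3 with k
  push_cast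
  ring

theorem summable_exp_neg_mul_two_mul_add_sq {u : ℝ} (hu : 0 < u) (r : ℤ) :
    Summable fun k : ℤ => exp (-π * u * ((2 * k + r : ℤ) : ℝ) ^ 2) :=
  (summable_exp_neg_mul_int_sq hu).comp_injective fun a b h => by simpa using h

theorem tsum_exp_neg_mul_two_mul_add_one_sq_le {u : ℝ} (hu : 0 < u) :
    ∑' k : ℤ, exp (-π * u * ((2 * k + 1 : ℤ) : ℝ) ^ 2) ≤ theta (4 * u) := by
  have hsplit : theta u = theta (4 * u) + ∑' k : ℤ, exp (-π * u * ((2 * k + 1 : ℤ) : ℝ) ^ 2) :=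
    (summable_exp_neg_mul_int_sq hu).hasSum.unique <|
      (hasSum_exp_neg_mul_two_mul_int_sq hu).int_even_add_odd
        (summable_exp_neg_mul_two_mul_add_sq hu 1).hasSum
  linarith [theta_le_two_mul_theta_four_mul hu]

theorem tsum_exp_neg_mul_two_mul_add_sq_le {u : ℝ} (hu : 0 < u) (r : ℤ) :
    ∑' k : ℤ, exp (-π * u * ((2 * k + r : ℤ) : ℝ) ^ 2) ≤ theta (4 * u) := by
  set g : ℤ → ℝ := fun n => exp (-π * u * (n : ℝ) ^ 2)
  obtain ⟨m, rfl | rfl⟩ := Int.even_or_odd' r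
  · apply le_of_eq
    calc ∑' k : ℤ, g (2 * k + 2 * m) = ∑' k : ℤ, g (2 * (k + m)) := by simp only [mul_add]
      _ = theta (4 * u) := ((Equiv.addRight m).tsum_eq fun k => g (2 * k)).trans
          (hasSum_exp_neg_mul_two_mul_int_sq hu).tsum_eq
  · calc ∑' k : ℤ, g (2 * k + (2 * m + 1)) = ∑' k : ℤ, g (2 * (k + m) + 1) := by
          simp only [mul_add, add_assoc]
      _ ≤ theta (4 * u) := ((Equiv.addRight m).tsum_eq fun k => g (2 * k + 1)).trans_le
          (tsum_exp_neg_mul_two_mul_add_one_sq_le hu)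

theorem theta_le_one_add_div_one_sub {u : ℝ} (hu : 0 < u) :
    theta u ≤ (1 + exp (-π * u)) / (1 - exp (-π * u)) := by
  refine hasSum_le (fun n => ?_) (summable_exp_neg_mul_int_sq hu).hasSum
    (hasSum_pow_natAbs (exp_pos _).le (exp_lt_one_iff.2 (by nlinarith [pi_pos])))
  have hn : (n.natAbs : ℝ) ≤ (n : ℝ) ^ 2 := by
    rw [Nat.cast_natAbs]
    exact_mod_cast Int.natAbs_le_self_sq n
  rw [← exp_nat_mul, exp_le_exp]
  nlinarith [pi_pos, mul_pos pi_pos hu]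

theorem exp_neg_pi_mul_sq_div_two_lt_half {r : ℝ} (hr : r₀ < r) :
    exp (-π * (r ^ 2 / 2)) < 1 / 2 := by
  have hr₀ : r₀ ^ 2 = log 4 / π := sq_sqrt (div_nonneg (log_nonneg (by norm_num)) pi_pos.le)
  have hlog4 : log 4 < π * r ^ 2 := by
    have := pow_lt_pow_left₀ hr (sqrt_nonneg _) two_ne_zero
    rw [hr₀, div_lt_iff₀ pi_pos] at this
    linarith
  have hlog4_eq : log 4 = 2 * log 2 := by
    rw [show (4 : ℝ) = 2 ^ 2 by norm_num, log_pow, Nat.cast_ofNat]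
  calc exp (-π * (r ^ 2 / 2)) < exp (-log 2) := exp_lt_exp.2 (by linarith)
    _ = 1 / 2 := by rw [exp_neg, exp_log two_pos, one_div]

theorem r₀_pos : 0 < r₀ :=
  sqrt_pos.2 (div_pos (log_pos (by norm_num)) pi_pos)

theorem Eg_eq (r : ℝ) : Eg r = 1 - 2 * exp (-π * (r ^ 2 / 2)) := by
  rw [Eg]; ring_nf

theorem Eg_pos {r : ℝ} (hr : r₀ < r) : 0 < Eg r := by
  rw [Eg_eq]; linarith [exp_neg_pi_mul_sq_div_two_lt_half hr]

theorem theta_sq_div_two_lt_inv_Eg {r : ℝ} (hr : r₀ < r) : theta (r ^ 2 / 2) < (Eg r)⁻¹ := by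
  have hr_pos : 0 < r := lt_of_le_of_lt (sqrt_nonneg _) hr
  have hx := exp_neg_pi_mul_sq_div_two_lt_half hr
  have hx₀ := exp_pos (-π * (r ^ 2 / 2))
  set x := exp (-π * (r ^ 2 / 2))
  calc theta (r ^ 2 / 2) ≤ (1 + x) / (1 - x) := theta_le_one_add_div_one_sub (by positivity)
    _ < (1 - 2 * x)⁻¹ := by
      rw [div_lt_iff₀ (by linarith), inv_mul_eq_div, lt_div_iff₀ (by linarith)]
      nlinarith
    _ = (Eg r)⁻¹ := by rw [Eg_eq]

def lqParam (q : ℕ) (p : ℤ × ℤ) : ℝ × ℝ := (p.2, p.2 + q * p.1)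

theorem range_lqParam (q : ℕ) : Set.range (lqParam q) = LqSet q := by
  ext ⟨x, y⟩
  simp only [Set.mem_range, lqParam, LqSet, Set.mem_ofPred_eq, Prod.mk.injEq, Prod.exists]
  constructor
  · rintro ⟨k, a, rfl, rfl⟩
    exact ⟨a, 0, k, by simp, rfl⟩
  · rintro ⟨z, w₁, w₂, rfl, rfl⟩
    exact ⟨w₂ - w₁, z + q * w₁, by push_cast; ring, by push_cast; ring⟩

theorem lqParam_injective {q : ℕ} (hq : q ≠ 0) : Function.Injective (lqParam q) := by
  rintro ⟨k, a⟩ ⟨k', a'⟩ h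
  simp only [lqParam, Prod.mk.injEq, Int.cast_inj] at h
  obtain ⟨rfl, h⟩ := h
  simp_all

theorem fsLq_eq_tsum_int_prod (f : ℝ → ℝ) (s : ℝ) {q : ℕ} (hq : q ≠ 0) :
    fsLq f s q = ∑' p : ℤ × ℤ, f (p.2 / s) * f ((p.2 + q * p.1) / s) := by
  rw [fsLq, ← range_lqParam, tsum_range (fun v : ℝ × ℝ => f (v.1 / s) * f (v.2 / s))
    (lqParam_injective hq)]
  rfl

theorem gauss_mul_gauss_lattice_eq (s : ℝ) (q : ℕ) (k a : ℤ) :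
    gauss (a / s) * gauss ((a + q * k) / s) =
      exp (-π * ((q / s) ^ 2 / 2) * k ^ 2) *
        exp (-π * (2 * s ^ 2)⁻¹ * ((2 * a + q * k : ℤ) : ℝ) ^ 2) := by
  rw [gauss, gauss, ← exp_add, ← exp_add]
  push_cast
  ring_nf

theorem gauss_mul_gauss_lattice_nonneg (s : ℝ) (q : ℕ) :
    0 ≤ fun p : ℤ × ℤ => gauss (p.2 / s) * gauss ((p.2 + q * p.1) / s) :=
  fun _ => mul_nonneg (exp_pos _).le (exp_pos _).le

section Lattice

variable {s : ℝ} {q : ℕ}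

theorem summable_gauss_mul_gauss_lattice_row (hs : 0 < s) (k : ℤ) :
    Summable fun a : ℤ => gauss (a / s) * gauss ((a + q * k) / s) := by
  simp only [gauss_mul_gauss_lattice_eq]
  exact (summable_exp_neg_mul_two_mul_add_sq (by positivity) _).mul_left _

theorem tsum_gauss_mul_gauss_lattice_row_le (hs : 0 < s) (k : ℤ) :
    ∑' a : ℤ, gauss (a / s) * gauss ((a + q * k) / s) ≤
      exp (-π * ((q / s) ^ 2 / 2) * k ^ 2) * theta (4 * (2 * s ^ 2)⁻¹) := by
  simp only [gauss_mul_gauss_lattice_eq, tsum_mul_left]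
  exact mul_le_mul_of_nonneg_left (tsum_exp_neg_mul_two_mul_add_sq_le (by positivity) _)
    (exp_pos _).le

theorem summable_exp_neg_mul_sq_mul_theta (hq : q ≠ 0) (hs : 0 < s) :
    Summable fun k : ℤ => exp (-π * ((q / s) ^ 2 / 2) * k ^ 2) * theta (4 * (2 * s ^ 2)⁻¹) :=
  (summable_exp_neg_mul_int_sq (by positivity)).mul_right _

theorem fsLq_gauss_pos (hq : q ≠ 0) (hs : 0 < s) : 0 < fsLq gauss s q := by
  rw [fsLq_eq_tsum_int_prod _ _ hq]
  refine (summable_prod_of_tsum_le (gauss_mul_gauss_lattice_nonneg s q)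
    (summable_exp_neg_mul_sq_mul_theta hq hs) (summable_gauss_mul_gauss_lattice_row hs)
    (tsum_gauss_mul_gauss_lattice_row_le hs)).tsum_pos
    (gauss_mul_gauss_lattice_nonneg s q) (0, 0) ?_
  simp only [gauss, Int.cast_zero, zero_div]
  positivity

theorem fsLq_gauss_le (hq : q ≠ 0) (hs : 0 < s) :
    fsLq gauss s q ≤ s / √2 * (theta ((q / s) ^ 2 / 2) * theta (s ^ 2 / 2)) := by
  have hpoisson : theta (4 * (2 * s ^ 2)⁻¹) = s / √2 * theta (s ^ 2 / 2) := by
    rw [show 4 * (2 * s ^ 2)⁻¹ = (s ^ 2 / 2)⁻¹ by ring, theta_inv_eq_sqrt_mul_theta (by positivity),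
      sqrt_div' _ (by norm_num : (0 : ℝ) ≤ 2), sqrt_sq hs.le]
  rw [fsLq_eq_tsum_int_prod _ _ hq]
  calc _ ≤ ∑' k : ℤ, exp (-π * ((q / s) ^ 2 / 2) * k ^ 2) * theta (4 * (2 * s ^ 2)⁻¹) :=
        tsum_prod_le_of_tsum_le (gauss_mul_gauss_lattice_nonneg s q)
          (summable_exp_neg_mul_sq_mul_theta hq hs) (summable_gauss_mul_gauss_lattice_row hs)
          (tsum_gauss_mul_gauss_lattice_row_le hs)
    _ = s / √2 * (theta ((q / s) ^ 2 / 2) * theta (s ^ 2 / 2)) := by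
        rw [tsum_mul_right, hpoisson]
        change theta _ * _ = _
        ring

end Lattice

end GaussianLq

open GaussianLq in
/-- Gaussian bound on `f_s(L_q)`: for `r₀ < s < q/r₀`,
`1/f_s(L_q) > (√2/s)·E_q(s)²`. -/
theorem gaussian_bound_Lq (s : ℝ) (q : ℕ) (hq : 0 < q)
    (hs₁ : r₀ < s) (hs₂ : s < q / r₀) :
    1 / fsLq gauss s q > Real.sqrt 2 / s * Egq q s ^ 2 := by
  have hs : 0 < s := r₀_pos.trans hs₁
  have hqs : r₀ < q / s := by
    rwa [lt_div_iff₀ hs, mul_comm, ← lt_div_iff₀ r₀_pos]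
  have hE₁ := Eg_pos hqs
  have hE₂ := Eg_pos hs₁
  have hbound : fsLq gauss s q < s / √2 * ((Eg (q / s))⁻¹ * (Eg s)⁻¹) :=
    calc fsLq gauss s q ≤ s / √2 * (theta ((q / s) ^ 2 / 2) * theta (s ^ 2 / 2)) :=
          fsLq_gauss_le hq.ne' hs
      _ < s / √2 * ((Eg (q / s))⁻¹ * (Eg s)⁻¹) := by
          gcongr
          exacts [theta_nonneg _, theta_nonneg _, theta_sq_div_two_lt_inv_Eg hqs,
            theta_sq_div_two_lt_inv_Eg hs₁]
  rw [Egq, sq_sqrt (mul_pos hE₁ hE₂).le, gt_iff_lt, one_div,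
    lt_inv_comm₀ (by positivity) (fsLq_gauss_pos hq.ne' hs)]
  exact hbound.trans_eq (by rw [mul_inv, inv_div, mul_inv])

end
end

section
/- Gaussian tail bound for lattices (Banaszczyk-type): Let f(x) = exp(−π‖x‖₂²) be the Gaussian on ℝ^n, let L ⊂ ℝ^n be a full-rank lattice, u ∈ ℝ^n a unit vector, and s, t > 0. Define T_{u,t} := {x ∈ ℝ^n : |⟨x, u⟩| ≥ t}. Then f_s(L ∩ T_{u,t}) < 2·exp(−πt²/s²)·f_s(L). -/
noncomputable section

open RealInnerProductSpace

/-- The full-rank lattice in ℝ^n generated by the basis `B`. -/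
def latt (n : ℕ) (B : Module.Basis (Fin n) ℝ (EuclideanSpace ℝ (Fin n))) :
    Set (EuclideanSpace ℝ (Fin n)) :=
  {x | ∃ z : Fin n → ℤ, x = ∑ i, (z i : ℝ) • B i}

/-- `f_s(X) = Σ_{x ∈ X} exp(−π‖x‖²/s²)`: the scaled Gaussian mass of a set `X ⊆ ℝ^n`. -/
def gaussMass (n : ℕ) (s : ℝ) (X : Set (EuclideanSpace ℝ (Fin n))) : ℝ :=
  ∑' x : X, Real.exp (-(Real.pi * ‖(x : EuclideanSpace ℝ (Fin n))‖ ^ 2 / s ^ 2))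

open scoped ENNReal NNReal

/-!
Write `ρ_β(x) = exp(-β‖x‖²)` and `ρ_β(A) = Σ_{x ∈ A} ρ_β(x)`. If `⟪x, u⟫ ≥ t` then
`ρ(x) ≤ e^{-βt²} ρ(x - t u)` (and symmetrically for `⟪x, u⟫ ≤ -t`), so
`ρ(L ∩ T) ≤ e^{-βt²} (ρ(L - t u) + ρ(L + t u))`, strictly since `0 ∉ T` contributes on the right.
It remains to show that no coset `L + c` is heavier than `L`; instead of Poisson summation we
use the parallelogram law `ρ_β(a) ρ_β(b) = ρ_{β/2}(a + b) ρ_{β/2}(a - b)`. The pairs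
`(x + y, x - y)` with `x, y ∈ L` are exactly the pairs of points of `L` congruent modulo `2L`,
so grouping by classes of `L / 2L` and using `2ab ≤ a² + b²` gives
`2 ρ(L + u) ρ(L + v) ≤ ρ(L) (ρ(L + u + v) + ρ(L + u - v))`. For `M = sup_c ρ(L + c)`, which is
finite because `ρ(L + c)` only depends on `c` modulo `L`, this reads `M² ≤ ρ(L) M`, i.e.
`M ≤ ρ(L)`.
-/

theorem ENNReal.two_mul_le_add_sq (a b : ℝ≥0∞) : 2 * a * b ≤ a ^ 2 + b ^ 2 := by
  rcases eq_or_ne a ⊤ with rfl | ha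
  · simp
  rcases eq_or_ne b ⊤ with rfl | hb
  · simp
  lift a to ℝ≥0 using ha
  lift b to ℝ≥0 using hb
  exact_mod_cast _root_.two_mul_le_add_sq a b

theorem ENNReal.tsum_subtype_lt_of_mem_diff {α : Type*} (f : α → ℝ≥0∞) {s t : Set α}
    (hst : s ⊆ t) {a : α} (ha : a ∈ t \ s) (hfa : f a ≠ 0) (hf : ∑' x : t, f x ≠ ∞) :
    ∑' x : s, f x < ∑' x : t, f x := by
  have hle : s.indicator f ≤ t.indicator f :=
    Set.indicator_le_indicator_of_subset hst fun _ => bot_le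
  rw [tsum_subtype] at hf
  rw [tsum_subtype, tsum_subtype]
  refine ENNReal.tsum_lt_tsum (i := a) (ne_top_of_le_ne_top hf (ENNReal.tsum_le_tsum hle)) hle ?_
  rw [Set.indicator_of_notMem ha.2, Set.indicator_of_mem ha.1]
  exact pos_iff_ne_zero.2 hfa

section DoublingKernel

variable {M : Type*} [AddCommGroup M]

variable (M) in
def modTwo : M → M ⧸ (nsmulAddMonoidHom (α := M) 2).range := QuotientAddGroup.mk

theorem tsum_modTwo_fiber_eq [IsAddTorsionFree M] (h : M → ℝ≥0∞) (a : M) :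
    ∑' b : modTwo M ⁻¹' {modTwo M a}, h b = ∑' y, h (a - 2 • y) := by
  have hfiber : Set.range (fun y : M => a - 2 • y) = modTwo M ⁻¹' {modTwo M a} := by
    ext b
    simp only [Set.mem_range, Set.mem_preimage, Set.mem_singleton_iff, modTwo,
      QuotientAddGroup.eq, AddMonoidHom.mem_range, nsmulAddMonoidHom_apply]
    constructor
    · rintro ⟨y, rfl⟩
      exact ⟨y, by abel⟩
    · rintro ⟨y, hy⟩
      exact ⟨y, by rw [hy]; abel⟩
  rw [← hfiber, tsum_range h]
  intro y z hyz
  exact IsAddTorsionFree.nsmul_right_injective two_ne_zero (sub_right_injective hyz)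

theorem tsum_tsum_add_mul_sub_eq [IsAddTorsionFree M] (f h : M → ℝ≥0∞) :
    ∑' x, ∑' y, f (x + y) * h (x - y) =
      ∑' q, (∑' a : modTwo M ⁻¹' {q}, f (a : M)) *
        ∑' b : modTwo M ⁻¹' {q}, h (b : M) := by
  calc ∑' x, ∑' y, f (x + y) * h (x - y)
      = ∑' y, ∑' x, f (x + y) * h (x - y) := ENNReal.tsum_comm
    _ = ∑' y, ∑' a, f a * h (a - 2 • y) := tsum_congr fun y => by
        rw [← (Equiv.subRight y).tsum_eq]
        simp only [Equiv.subRight_apply, sub_add_cancel, sub_sub, two_nsmul]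
    _ = ∑' a, f a * ∑' y, h (a - 2 • y) := by
        rw [ENNReal.tsum_comm]
        simp_rw [ENNReal.tsum_mul_left]
    _ = ∑' a, f a * ∑' b : modTwo M ⁻¹' {modTwo M a}, h b := by
        simp_rw [tsum_modTwo_fiber_eq]
    _ = ∑' q, (∑' a : modTwo M ⁻¹' {q}, f (a : M)) *
          ∑' b : modTwo M ⁻¹' {q}, h (b : M) := by
        rw [← ENNReal.tsum_fiberwise _ (modTwo M)]
        refine tsum_congr fun q => ?_
        rw [← ENNReal.tsum_mul_right]
        refine tsum_congr fun a => ?_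
        rw [show modTwo M (a : M) = q from a.2]

theorem two_mul_tsum_tsum_add_mul_sub_le [IsAddTorsionFree M] (f h : M → ℝ≥0∞) :
    2 * ∑' x, ∑' y, f (x + y) * h (x - y) ≤
      ∑' x, ∑' y, f (x + y) * f (x - y) + ∑' x, ∑' y, h (x + y) * h (x - y) := by
  rw [tsum_tsum_add_mul_sub_eq, tsum_tsum_add_mul_sub_eq, tsum_tsum_add_mul_sub_eq,
    ← ENNReal.tsum_mul_left, ← ENNReal.tsum_add]
  refine ENNReal.tsum_le_tsum fun q => ?_
  simpa only [sq, mul_assoc] using ENNReal.two_mul_le_add_sq _ _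

end DoublingKernel

section Gaussian

variable {E : Type*} [NormedAddCommGroup E]

def gaussWeight (β : ℝ) (x : E) : ℝ≥0∞ := ENNReal.ofReal (Real.exp (-(β * ‖x‖ ^ 2)))

theorem gaussWeight_ne_top (β : ℝ) (x : E) : gaussWeight β x ≠ ∞ := ENNReal.ofReal_ne_top

theorem gaussWeight_pos (β : ℝ) (x : E) : 0 < gaussWeight β x :=
  ENNReal.ofReal_pos.2 (Real.exp_pos _)

@[simp]
theorem gaussWeight_zero (β : ℝ) : gaussWeight β (0 : E) = 1 := by simp [gaussWeight]

theorem gaussWeight_add_le {β : ℝ} (hβ : 0 ≤ β) (x c : E) :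
    gaussWeight β (x + c) ≤
      ENNReal.ofReal (Real.exp (β * ‖c‖ ^ 2)) * gaussWeight (β / 2) x := by
  rw [gaussWeight, gaussWeight, ← ENNReal.ofReal_mul (Real.exp_nonneg _), ← Real.exp_add]
  gcongr
  have hx : ‖x‖ ≤ ‖x + c‖ + ‖c‖ := by simpa using norm_sub_le (x + c) c
  have hsq : ‖x‖ ^ 2 ≤ 2 * ‖x + c‖ ^ 2 + 2 * ‖c‖ ^ 2 := by
    nlinarith [sq_nonneg (‖x + c‖ - ‖c‖), norm_nonneg x]
  nlinarith [mul_le_mul_of_nonneg_left hsq hβ]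

variable [InnerProductSpace ℝ E]

theorem gaussWeight_mul_gaussWeight (β : ℝ) (a b : E) :
    gaussWeight β a * gaussWeight β b =
      gaussWeight (β / 2) (a + b) * gaussWeight (β / 2) (a - b) := by
  simp only [gaussWeight, ← ENNReal.ofReal_mul (Real.exp_nonneg _), ← Real.exp_add]
  congr 2
  linear_combination (β / 2) * norm_add_sq_real a b + (β / 2) * norm_sub_sq_real a b

theorem gaussWeight_le_mul_gaussWeight_sub {β t : ℝ} (hβ : 0 ≤ β) (ht : 0 ≤ t) {u x : E}
    (hu : ‖u‖ = 1) (hx : t ≤ ⟪x, u⟫) :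
    gaussWeight β x ≤
      ENNReal.ofReal (Real.exp (-(β * t ^ 2))) * gaussWeight β (x - t • u) := by
  rw [gaussWeight, gaussWeight, ← ENNReal.ofReal_mul (Real.exp_nonneg _), ← Real.exp_add]
  gcongr
  rw [norm_sub_sq_real, real_inner_smul_right, norm_smul, Real.norm_of_nonneg ht, hu]
  nlinarith [mul_nonneg hβ ht]

theorem gaussWeight_le_of_le_abs_inner {β t : ℝ} (hβ : 0 ≤ β) (ht : 0 ≤ t) {u x : E}
    (hu : ‖u‖ = 1) (hx : t ≤ |⟪x, u⟫|) :
    gaussWeight β x ≤ ENNReal.ofReal (Real.exp (-(β * t ^ 2))) *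
      (gaussWeight β (x - t • u) + gaussWeight β (x + t • u)) := by
  rcases le_abs'.1 hx with hneg | hpos
  · have h := gaussWeight_le_mul_gaussWeight_sub hβ ht (u := -u) (by rwa [norm_neg])
      (by rw [inner_neg_right]; linarith)
    rw [smul_neg, sub_neg_eq_add] at h
    exact h.trans (by gcongr; exact le_add_self)
  · exact (gaussWeight_le_mul_gaussWeight_sub hβ ht hu hpos).trans
      (by gcongr; exact le_self_add)

end Gaussian

section LatticeSum

variable {E : Type*} [NormedAddCommGroup E] (L : Submodule ℤ E)

def cosetGaussMass (β : ℝ) (c : E) : ℝ≥0∞ := ∑' x : L, gaussWeight β (x + c)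

theorem one_le_cosetGaussMass_zero (β : ℝ) : 1 ≤ cosetGaussMass L β 0 := by
  simpa [cosetGaussMass] using ENNReal.le_tsum (f := fun x : L => gaussWeight β ((x : E) + 0)) 0

theorem cosetGaussMass_add_of_mem (β : ℝ) {v : E} (hv : v ∈ L) (c : E) :
    cosetGaussMass L β (v + c) = cosetGaussMass L β c := by
  rw [cosetGaussMass, ← (Equiv.subRight (⟨v, hv⟩ : L)).tsum_eq]
  exact tsum_congr fun x =>
    congrArg _ (by simp only [Equiv.subRight_apply, Submodule.coe_sub]; abel)

theorem cosetGaussMass_le_exp_mul {β : ℝ} (hβ : 0 ≤ β) (c : E) :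
    cosetGaussMass L β c ≤
      ENNReal.ofReal (Real.exp (β * ‖c‖ ^ 2)) * cosetGaussMass L (β / 2) 0 := by
  rw [cosetGaussMass, cosetGaussMass, ← ENNReal.tsum_mul_left]
  exact ENNReal.tsum_le_tsum fun x => by simpa using gaussWeight_add_le hβ (x : E) c

variable [InnerProductSpace ℝ E]

theorem cosetGaussMass_mul_cosetGaussMass (β : ℝ) (u v : E) :
    cosetGaussMass L β u * cosetGaussMass L β v = ∑' x : L, ∑' y : L,
      gaussWeight (β / 2) (((x + y : L) : E) + (u + v)) *
        gaussWeight (β / 2) (((x - y : L) : E) + (u - v)) := by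
  rw [cosetGaussMass, cosetGaussMass, ← ENNReal.tsum_mul_right]
  refine tsum_congr fun x => ?_
  rw [← ENNReal.tsum_mul_left]
  refine tsum_congr fun y => ?_
  rw [gaussWeight_mul_gaussWeight]
  congr 2 <;> push_cast <;> abel

theorem two_mul_cosetGaussMass_mul_le (β : ℝ) (u v : E) :
    2 * (cosetGaussMass L β u * cosetGaussMass L β v) ≤
      cosetGaussMass L β 0 * (cosetGaussMass L β (u + v) + cosetGaussMass L β (u - v)) := by
  have : IsAddTorsionFree L := ⟨fun n hn a b hab => Subtype.ext <|
    smul_right_injective E (Nat.cast_ne_zero.2 hn : (n : ℝ) ≠ 0)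
      (by simpa [Nat.cast_smul_eq_nsmul] using congrArg Subtype.val hab)⟩
  have hdiag : ∀ w : E, cosetGaussMass L β 0 * cosetGaussMass L β w = ∑' x : L, ∑' y : L,
      gaussWeight (β / 2) (((x + y : L) : E) + w) *
        gaussWeight (β / 2) (((x - y : L) : E) + w) := by
    intro w
    simpa [mul_comm] using cosetGaussMass_mul_cosetGaussMass L β w 0
  rw [cosetGaussMass_mul_cosetGaussMass, mul_add, hdiag, hdiag]
  exact two_mul_tsum_tsum_add_mul_sub_le (fun a : L => gaussWeight (β / 2) ((a : E) + (u + v)))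
    (fun a : L => gaussWeight (β / 2) ((a : E) + (u - v)))

theorem cosetGaussMass_le_cosetGaussMass_zero (β : ℝ) (hL : ⨆ c, cosetGaussMass L β c ≠ ∞)
    (c : E) : cosetGaussMass L β c ≤ cosetGaussMass L β 0 := by
  set G := cosetGaussMass L β
  set M := ⨆ c, G c
  have hprod : ∀ u v, G u * G v ≤ G 0 * M := by
    intro u v
    have h : 2 * (G u * G v) ≤ G 0 * (M + M) :=
      (two_mul_cosetGaussMass_mul_le L β u v).trans (by gcongr <;> exact le_iSup _ _)
    rw [← two_mul, mul_left_comm (G 0)] at h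
    exact (ENNReal.mul_le_mul_iff_right two_ne_zero ENNReal.ofNat_ne_top).1 h
  have hM : M * M ≤ G 0 * M := by
    rw [ENNReal.iSup_mul]
    exact iSup_le fun u => by rw [ENNReal.mul_iSup]; exact iSup_le (hprod u)
  have hM0 : M ≠ 0 :=
    (zero_lt_one.trans_le ((one_le_cosetGaussMass_zero L β).trans (le_iSup _ 0))).ne'
  exact (le_iSup _ c).trans ((ENNReal.mul_le_mul_iff_left hM0 hL).1 hM)

end LatticeSum

section FullRank

open Submodule

variable {E : Type*} [NormedAddCommGroup E] [NormedSpace ℝ E]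

theorem Real.exp_neg_mul_sq_le {β r : ℝ} (hβ : 0 < β) (hr : 0 < r) (k : ℕ) :
    Real.exp (-(β * r ^ 2)) ≤ k.factorial / β ^ k * r⁻¹ ^ (2 * k) := by
  calc Real.exp (-(β * r ^ 2)) = (Real.exp (β * r ^ 2))⁻¹ := Real.exp_neg _
    _ ≤ ((β * r ^ 2) ^ k / k.factorial)⁻¹ :=
      inv_anti₀ (by positivity) (Real.pow_div_factorial_le_exp _ (by positivity) k)
    _ = k.factorial / β ^ k * r⁻¹ ^ (2 * k) := by
      rw [inv_div, mul_pow, ← pow_mul, inv_pow, mul_comm 2 k]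
      field_simp

theorem summable_exp_neg_mul_norm_sq [FiniteDimensional ℝ E] (L : Submodule ℤ E)
    [DiscreteTopology L] {β : ℝ} (hβ : 0 < β) :
    Summable fun x : L => Real.exp (-(β * ‖(x : E)‖ ^ 2)) := by
  set k := Module.finrank ℤ L + 1
  refine Summable.of_norm_bounded_eventually
    ((ZLattice.summable_norm_pow_inv L (2 * k) (by omega)).mul_left (k.factorial / β ^ k)) ?_
  filter_upwards [Filter.eventually_cofinite_ne 0] with x hx
  rw [Real.norm_of_nonneg (Real.exp_nonneg _)]
  exact Real.exp_neg_mul_sq_le hβ (norm_pos_iff.2 hx) k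

theorem cosetGaussMass_zero_ne_top [FiniteDimensional ℝ E] (L : Submodule ℤ E)
    [DiscreteTopology L] {β : ℝ} (hβ : 0 < β) : cosetGaussMass L β 0 ≠ ∞ := by
  simp only [cosetGaussMass, add_zero, gaussWeight]
  rw [← ENNReal.ofReal_tsum_of_nonneg (fun _ => Real.exp_nonneg _)
    (summable_exp_neg_mul_norm_sq L hβ)]
  exact ENNReal.ofReal_ne_top

theorem iSup_cosetGaussMass_span_ne_top {ι : Type*} [Fintype ι] (b : Module.Basis ι ℝ E)
    {β : ℝ} (hβ : 0 < β) : ⨆ c, cosetGaussMass (span ℤ (Set.range b)) β c ≠ ∞ := by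
  have : FiniteDimensional ℝ E := b.finiteDimensional_of_finite
  set L := span ℤ (Set.range b)
  have hbound : ∀ c, cosetGaussMass L β c ≤
      ENNReal.ofReal (Real.exp (β * (∑ i, ‖b i‖) ^ 2)) * cosetGaussMass L (β / 2) 0 := by
    intro c
    have hc : (ZSpan.floor b c : E) + ZSpan.fract b c = c := by rw [ZSpan.fract_apply]; abel
    rw [← hc, cosetGaussMass_add_of_mem _ _ (ZSpan.floor b c).2]
    refine (cosetGaussMass_le_exp_mul _ hβ.le _).trans ?_
    gcongr
    exact ZSpan.norm_fract_le b c
  exact ne_top_of_le_ne_top (ENNReal.mul_ne_top ENNReal.ofReal_ne_top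
    (cosetGaussMass_zero_ne_top L (half_pos hβ))) (iSup_le hbound)

end FullRank

section Tail

variable {E : Type*} [NormedAddCommGroup E] [InnerProductSpace ℝ E]

theorem tsum_gaussWeight_inter_tail_lt (L : Submodule ℤ E) {β t : ℝ} (hβ : 0 ≤ β)
    (ht : 0 < t) {u : E} (hu : ‖u‖ = 1) (hL : ⨆ c, cosetGaussMass L β c ≠ ∞) :
    ∑' x : ((L : Set E) ∩ {x | t ≤ |⟪x, u⟫|} : Set E), gaussWeight β (x : E) <
      2 * ENNReal.ofReal (Real.exp (-(β * t ^ 2))) * ∑' x : L, gaussWeight β (x : E) := by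
  set T : Set E := {x | t ≤ |⟪x, u⟫|}
  set e := ENNReal.ofReal (Real.exp (-(β * t ^ 2)))
  set φ : E → ℝ≥0∞ := fun x => gaussWeight β (x - t • u) + gaussWeight β (x + t • u)
  have hφL : ∑' x : L, φ x ≤ 2 * cosetGaussMass L β 0 := by
    have hsplit :
        ∑' x : L, φ x = cosetGaussMass L β (-(t • u)) + cosetGaussMass L β (t • u) := by
      simp only [φ, cosetGaussMass, sub_eq_add_neg]
      exact ENNReal.tsum_add
    rw [hsplit, two_mul]
    exact add_le_add (cosetGaussMass_le_cosetGaussMass_zero L β hL _)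
      (cosetGaussMass_le_cosetGaussMass_zero L β hL _)
  have hG0 : 2 * cosetGaussMass L β 0 ≠ ∞ := ENNReal.mul_ne_top ENNReal.ofNat_ne_top
    (ne_top_of_le_ne_top hL (le_iSup _ _))
  have h0 : (0 : E) ∈ (L : Set E) \ (L ∩ T) :=
    ⟨L.zero_mem, fun h => (not_le.2 ht) (by simpa [T] using h.2)⟩
  have hlt : ∑' x : ((L : Set E) ∩ T : Set E), φ x < ∑' x : (L : Set E), φ x :=
    ENNReal.tsum_subtype_lt_of_mem_diff φ Set.inter_subset_left h0
      (fun h => (gaussWeight_pos β _).ne' (add_eq_zero.1 h).1) (ne_top_of_le_ne_top hG0 hφL)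
  calc ∑' x : ((L : Set E) ∩ T : Set E), gaussWeight β (x : E)
      ≤ ∑' x : ((L : Set E) ∩ T : Set E), e * φ x :=
        ENNReal.tsum_le_tsum fun x => gaussWeight_le_of_le_abs_inner hβ ht.le hu x.2.2
    _ = e * ∑' x : ((L : Set E) ∩ T : Set E), φ x := ENNReal.tsum_mul_left
    _ < e * ∑' x : (L : Set E), φ x :=
        (ENNReal.mul_lt_mul_iff_right (ENNReal.ofReal_pos.2 (Real.exp_pos _)).ne'
          ENNReal.ofReal_ne_top).2 hlt
    _ ≤ e * (2 * cosetGaussMass L β 0) := by gcongr; exact hφL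
    _ = 2 * e * ∑' x : L, gaussWeight β (x : E) := by simp [cosetGaussMass]; ring

end Tail

theorem latt_eq_span (n : ℕ) (B : Module.Basis (Fin n) ℝ (EuclideanSpace ℝ (Fin n))) :
    latt n B = Submodule.span ℤ (Set.range B) := by
  ext x
  simp only [latt, Set.mem_ofPred_eq, SetLike.mem_coe, Submodule.mem_span_range_iff_exists_fun,
    Int.cast_smul_eq_zsmul, eq_comm]

theorem gaussMass_eq_toReal_tsum_gaussWeight (n : ℕ) (s : ℝ)
    (X : Set (EuclideanSpace ℝ (Fin n))) :
    gaussMass n s X =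
      (∑' x : X, gaussWeight (Real.pi / s ^ 2) (x : EuclideanSpace ℝ (Fin n))).toReal := by
  rw [ENNReal.tsum_toReal_eq fun _ => gaussWeight_ne_top _ _, gaussMass]
  refine tsum_congr fun x => ?_
  rw [gaussWeight, ENNReal.toReal_ofReal (Real.exp_nonneg _), div_mul_eq_mul_div]

/-- Gaussian tail bound for lattices (Banaszczyk-type): for a full-rank lattice `L`
(generated by basis `B`), a unit vector `u`, and `s, t > 0`, with
`T_{u,t} = {x : |⟨x,u⟩| ≥ t}`, we have
`f_s(L ∩ T_{u,t}) < 2·exp(−πt²/s²)·f_s(L)`. -/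
theorem gaussian_tail_bound (n : ℕ) (B : Module.Basis (Fin n) ℝ (EuclideanSpace ℝ (Fin n)))
    (u : EuclideanSpace ℝ (Fin n)) (hu : ‖u‖ = 1) (s t : ℝ) (hs : 0 < s) (ht : 0 < t) :
    gaussMass n s (latt n B ∩ {x | t ≤ |⟪x, u⟫|}) <
      2 * Real.exp (-(Real.pi * t ^ 2 / s ^ 2)) * gaussMass n s (latt n B) := by
  have hβ : 0 < Real.pi / s ^ 2 := by positivity
  have hL := iSup_cosetGaussMass_span_ne_top B hβ
  have hfin : ∑' x : Submodule.span ℤ (Set.range B),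
      gaussWeight (Real.pi / s ^ 2) (x : EuclideanSpace ℝ (Fin n)) ≠ ∞ := by
    simpa [cosetGaussMass] using ne_top_of_le_ne_top hL (le_iSup _ 0)
  rw [gaussMass_eq_toReal_tsum_gaussWeight, gaussMass_eq_toReal_tsum_gaussWeight, latt_eq_span]
  refine (ENNReal.toReal_strict_mono (by finiteness)
    (tsum_gaussWeight_inter_tail_lt _ hβ.le ht hu hL)).trans_eq ?_
  rw [ENNReal.toReal_mul, ENNReal.toReal_mul, ENNReal.toReal_ofNat,
    ENNReal.toReal_ofReal (Real.exp_nonneg _), div_mul_eq_mul_div]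
  rfl

end
end

section
/- ℓ₂ minimum distance of twisted GRS codes: Let q be prime, let α₁,…,α_n ∈ F_q be distinct and nonzero (so n ≤ q−1), and let 1 ≤ k ≤ n. Then every nonzero codeword c of the code GRS_{q,k}(α,α) = {(α₁u(α₁),…,α_n u(α_n)) : u ∈ F_q[X], deg u < k} satisfies ‖c‖₂² ≥ ((n+1)² − k²)/(12k²) · (n+1), and this quantity is strictly greater than ((1 − R²)/(12R²))·n where R = k/n; here ‖c‖₂ is computed by lifting each coordinate of c to its representative in [−q/2, q/2) ∩ ℤ. -/
noncomputable section

/-- The lift of `x : ZMod q` to its distinguished integer representative in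
`[−q/2, q/2) ∩ ℤ`. -/
def zlift (q : ℕ) (x : ZMod q) : ℤ :=
  if 2 * x.val < q then (x.val : ℤ) else (x.val : ℤ) - q

/-!
Write `cᵢ = (X·u)(αᵢ)` and let `tᵢ` be the integer lifts. A nonzero residue is a value of
`X·u`, a polynomial of degree `≤ k`, at most `k` times, and `0` at most `k − 1` times
because the nonzero `αᵢ` it is taken at are roots of `u`. Hence fewer than `(2j+1)k`
coordinates have `|tᵢ| ≤ j`, that is, at least `n + 1 − (2j+1)k` have `|tᵢ| > j`.
Summing the layer-cake identity `t² = ∑_{j < |t|} (2j+1)` over `j < m` gives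
`∑ tᵢ² ≥ ∑_{j<m} (2j+1)(n+1−(2j+1)k)`, a cubic in `m` which is at least
`(n+1)((n+1)²−k²)/(12k²)` once `2km` is within `k` of `n + 1`.
-/

open Finset
open scoped Polynomial

variable {ι : Type*} [Fintype ι]

namespace Polynomial

variable {R : Type*} [CommRing R] [IsDomain R] [DecidableEq R] {α : ι → R}

theorem card_filter_eval_eq_zero_le (hα : Function.Injective α) {p : R[X]} (hp : p ≠ 0) :
    #{i | p.eval (α i) = 0} ≤ p.natDegree := by
  rw [← card_image_of_injective _ hα]
  refine card_le_degree_of_subset_roots fun x hx => ?_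
  obtain ⟨i, hi, rfl⟩ := mem_image.mp hx
  exact (mem_roots hp).mpr (mem_filter.mp hi).2

theorem card_filter_eval_eq_le (hα : Function.Injective α) {p : R[X]} {v : R} (hp : p ≠ C v) :
    #{i | p.eval (α i) = v} ≤ p.natDegree := by
  simpa [sub_eq_zero, natDegree_sub_C] using
    card_filter_eval_eq_zero_le hα (p := p - C v) (sub_ne_zero.mpr hp)

theorem card_filter_mul_eval_eq_le (hα : Function.Injective α) (u : R[X]) {v : R} (hv : v ≠ 0) :
    #{i | α i * u.eval (α i) = v} ≤ u.natDegree + 1 := by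
  have hXu : X * u ≠ C v := fun h => hv (by simpa using congr_arg (coeff · 0) h.symm)
  simpa [add_comm] using (card_filter_eval_eq_le hα hXu).trans natDegree_mul_le

theorem card_filter_mul_eval_eq_zero_le (hα : Function.Injective α) (hα0 : ∀ i, α i ≠ 0)
    {u : R[X]} (hu : u ≠ 0) : #{i | α i * u.eval (α i) = 0} ≤ u.natDegree := by
  simpa [hα0] using card_filter_eval_eq_zero_le hα hu

end Polynomial

theorem sum_range_odd_ite_lt (m n : ℕ) :
    ∑ j ∈ range m, (if j < n then 2 * j + 1 else 0) = min m n ^ 2 := by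
  induction m with
  | zero => simp
  | succ m ih =>
    rw [sum_range_succ, ih]
    split_ifs with h
    · rw [min_eq_left h.le, min_eq_left (by omega : m + 1 ≤ n)]; ring
    · rw [min_eq_right (not_lt.mp h), min_eq_right (by omega), add_zero]

theorem sum_range_odd_mul_card_lt_natAbs_le_sum_sq (t : ι → ℤ) (m : ℕ) :
    ∑ j ∈ range m, (2 * j + 1) * #{i | j < (t i).natAbs} ≤ ∑ i, (t i).natAbs ^ 2 := by
  calc ∑ j ∈ range m, (2 * j + 1) * #{i | j < (t i).natAbs}
      = ∑ i, ∑ j ∈ range m, (if j < (t i).natAbs then 2 * j + 1 else 0) := by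
        simp_rw [card_filter, mul_sum, mul_ite, mul_one, mul_zero]
        exact sum_comm
    _ ≤ ∑ i, (t i).natAbs ^ 2 := by
        gcongr with i
        rw [sum_range_odd_ite_lt]
        exact Nat.pow_le_pow_left (min_le_right _ _) 2

theorem card_filter_natAbs_le_lt {t : ι → ℤ} {k : ℕ} (hfib : ∀ b, #{i | t i = b} ≤ k)
    (hzero : #{i | t i = 0} < k) (j : ℕ) :
    #{i | (t i).natAbs ≤ j} < (2 * j + 1) * k := by
  have hsub (b : ℤ) : #{i ∈ {i | (t i).natAbs ≤ j} | t i = b} ≤ #{i | t i = b} :=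
    card_le_card (filter_subset_filter _ (filter_subset _ _))
  calc #{i | (t i).natAbs ≤ j}
      = ∑ b ∈ Icc (-(j : ℤ)) j, #{i ∈ {i | (t i).natAbs ≤ j} | t i = b} :=
        card_eq_sum_card_fiberwise fun i hi => by
          simp only [coe_filter, mem_univ, true_and, Set.mem_ofPred_eq, coe_Icc,
            Set.mem_Icc] at hi ⊢
          omega
    _ < ∑ _b ∈ Icc (-(j : ℤ)) j, k :=
        sum_lt_sum (fun b _ => (hsub b).trans (hfib b)) ⟨0, by simp, (hsub 0).trans_lt hzero⟩
    _ = (2 * j + 1) * k := by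
        rw [sum_const, Int.card_Icc, smul_eq_mul]
        congr 1
        omega

theorem card_sub_le_card_filter_lt_natAbs {t : ι → ℤ} {k : ℕ}
    (hfib : ∀ b, #{i | t i = b} ≤ k) (hzero : #{i | t i = 0} < k) (j : ℕ) :
    (Fintype.card ι + 1 : ℤ) - (2 * j + 1) * k ≤ #{i | j < (t i).natAbs} := by
  have hsplit : (#{i | j < (t i).natAbs} : ℤ) + #{i | ¬ j < (t i).natAbs} = Fintype.card ι := by
    exact_mod_cast card_filter_add_card_filter_not (s := univ) _
  have hsmall : (#{i | ¬ j < (t i).natAbs} : ℤ) < (2 * j + 1) * k := by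
    simp only [not_lt]
    exact_mod_cast card_filter_natAbs_le_lt hfib hzero j
  linarith

theorem exists_nat_abs_two_mul_mul_sub_le {N k : ℝ} (hN : 0 ≤ N) (hk : 0 < k) :
    ∃ m : ℕ, |2 * k * m - N| ≤ k := by
  set x := N / (2 * k) + 1 / 2
  have hx : N = 2 * k * (x - 1 / 2) := by simp only [x]; field_simp; ring
  have hlo := Nat.floor_le (show 0 ≤ x by positivity)
  have hhi := Nat.lt_floor_add_one x
  refine ⟨⌊x⌋₊, abs_le.mpr ⟨?_, ?_⟩⟩ <;> rw [hx] <;> nlinarith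

theorem le_sum_range_odd_mul_sub {N k : ℝ} {m : ℕ} (hN : 0 ≤ N) (hk : 0 < k)
    (hm : |2 * k * m - N| ≤ k) :
    (N ^ 2 - k ^ 2) / (12 * k ^ 2) * N ≤
      ∑ j ∈ range m, (2 * j + 1) * (N - (2 * j + 1) * k) := by
  have closed_form : ∀ m : ℕ, ∑ j ∈ range m, (2 * j + 1) * (N - (2 * j + 1) * k)
      = N * m ^ 2 - k * m * (4 * m ^ 2 - 1) / 3 := by
    intro m
    induction m with
    | zero => simp
    | succ m ih => rw [sum_range_succ, ih]; push_cast; ring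
  obtain ⟨hlo, hhi⟩ := abs_le.mp hm
  -- the cubic in `m` minus the bound factors, with roots at `2 k m = N ± k`
  have factor : 12 * k ^ 2 * (N * m ^ 2 - k * m * (4 * m ^ 2 - 1) / 3) - (N ^ 2 - k ^ 2) * N
      = (2 * k * m - N + k) * (N + k - 2 * k * m) * (4 * k * m + N) := by ring
  have hpos : 0 ≤ (2 * k * m - N + k) * (N + k - 2 * k * m) * (4 * k * m + N) :=
    mul_nonneg (mul_nonneg (by linarith) (by linarith)) (by positivity)
  rw [closed_form, div_mul_eq_mul_div, div_le_iff₀ (by positivity)]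
  linarith

theorem le_sum_sq_of_card_fiber_le {t : ι → ℤ} {k : ℕ} (hfib : ∀ b, #{i | t i = b} ≤ k)
    (hzero : #{i | t i = 0} < k) :
    (((Fintype.card ι : ℝ) + 1) ^ 2 - k ^ 2) / (12 * k ^ 2) * (Fintype.card ι + 1) ≤
      ∑ i, (t i : ℝ) ^ 2 := by
  set N : ℝ := Fintype.card ι + 1
  have hk : (0 : ℝ) < k := by exact_mod_cast Nat.zero_lt_of_lt hzero
  obtain ⟨m, hm⟩ := exists_nat_abs_two_mul_mul_sub_le (by positivity : 0 ≤ N) hk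
  calc (N ^ 2 - k ^ 2) / (12 * k ^ 2) * N
      ≤ ∑ j ∈ range m, (2 * j + 1) * (N - (2 * j + 1) * k) :=
        le_sum_range_odd_mul_sub (by positivity) hk hm
    _ ≤ ∑ j ∈ range m, (2 * j + 1) * (#{i | j < (t i).natAbs} : ℝ) := by
        gcongr with j
        have := card_sub_le_card_filter_lt_natAbs hfib hzero j
        simp only [N]
        exact_mod_cast this
    _ ≤ ∑ i, ((t i).natAbs : ℝ) ^ 2 := by
        exact_mod_cast sum_range_odd_mul_card_lt_natAbs_le_sum_sq t m
    _ = ∑ i, (t i : ℝ) ^ 2 := by simp [Nat.cast_natAbs, sq_abs]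

theorem one_sub_div_sq_div_mul_lt {n k : ℝ} (hk : 0 < k) (hkn : k ≤ n) :
    (1 - (k / n) ^ 2) / (12 * (k / n) ^ 2) * n <
      ((n + 1) ^ 2 - k ^ 2) / (12 * k ^ 2) * (n + 1) := by
  have hn : 0 < n := hk.trans_le hkn
  have hL : (1 - (k / n) ^ 2) / (12 * (k / n) ^ 2) * n = (n ^ 2 - k ^ 2) * n / (12 * k ^ 2) := by
    field_simp
  rw [hL, div_mul_eq_mul_div, div_lt_div_iff_of_pos_right (by positivity)]
  nlinarith

theorem intCast_zlift (q : ℕ) [NeZero q] (x : ZMod q) : ((zlift q x : ℤ) : ZMod q) = x := by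
  unfold zlift
  split <;> simp

theorem card_filter_zlift_eq_le (q : ℕ) [NeZero q] (c : ι → ZMod q)
    (b : ℤ) : #{i | zlift q (c i) = b} ≤ #{i | c i = b} :=
  card_le_card fun i => by
    simp only [mem_filter, mem_univ, true_and]
    rintro rfl
    rw [intCast_zlift]

/-- ℓ₂ minimum distance of twisted GRS codes: for prime `q`, distinct nonzero
evaluation points `α`, and `1 ≤ k ≤ n`, every nonzero codeword
`c = (α₁u(α₁),…,α_n u(α_n))` with `deg u < k` satisfies
`‖c‖₂² ≥ ((n+1)² − k²)/(12k²)·(n+1) > ((1 − R²)/(12R²))·n`, `R = k/n`. -/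
theorem ell2_min_dist_twisted_GRS (q : ℕ) (hq : Nat.Prime q) (n k : ℕ)
    (hk1 : 1 ≤ k) (hkn : k ≤ n)
    (α : Fin n → ZMod q) (hinj : Function.Injective α) (hα0 : ∀ i, α i ≠ 0)
    (u : Polynomial (ZMod q)) (hu : u.degree < (k : WithBot ℕ))
    (c : Fin n → ZMod q) (hc : ∀ i, c i = α i * Polynomial.eval (α i) u)
    (hc0 : c ≠ 0) :
    (((n : ℝ) + 1) ^ 2 - (k : ℝ) ^ 2) / (12 * (k : ℝ) ^ 2) * ((n : ℝ) + 1) ≤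
        ∑ i, ((zlift q (c i) : ℝ)) ^ 2 ∧
      (1 - ((k : ℝ) / (n : ℝ)) ^ 2) / (12 * ((k : ℝ) / (n : ℝ)) ^ 2) * (n : ℝ) <
        (((n : ℝ) + 1) ^ 2 - (k : ℝ) ^ 2) / (12 * (k : ℝ) ^ 2) * ((n : ℝ) + 1) := by
  have : Fact q.Prime := ⟨hq⟩
  have hu0 : u ≠ 0 := by
    rintro rfl
    exact hc0 (funext fun i => by simp [hc i])
  have hdeg : u.natDegree < k := (Polynomial.natDegree_lt_iff_degree_lt hu0).mpr hu
  obtain rfl : c = fun i => α i * u.eval (α i) := funext hc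
  have hfib (b : ℤ) : #{i | zlift q (α i * u.eval (α i)) = b} ≤ k := by
    refine (card_filter_zlift_eq_le q _ b).trans ?_
    by_cases hb : (b : ZMod q) = 0
    · rw [hb]; exact (Polynomial.card_filter_mul_eval_eq_zero_le hinj hα0 hu0).trans hdeg.le
    · exact (Polynomial.card_filter_mul_eval_eq_le hinj u hb).trans hdeg
  have hzero : #{i | zlift q (α i * u.eval (α i)) = 0} < k :=
    ((card_filter_zlift_eq_le q _ 0).trans (by
      simpa using Polynomial.card_filter_mul_eval_eq_zero_le hinj hα0 hu0)).trans_lt hdeg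
  exact ⟨by simpa using le_sum_sq_of_card_fiber_le hfib hzero,
    one_sub_div_sq_div_mul_lt (by exact_mod_cast hk1) (by exact_mod_cast hkn)⟩

end
end

section
/- Worst-case ℓ₂ rate bound at the optimal scaling: Let f(x) = exp(−πx²) be the Gaussian, extended multiplicatively to ℝ². For any δ > √(ln 4)/(2π) and any prime q ≥ 4πδ², setting s := δ√(4π), it holds that W^(2)_{q,δ}(s)² := exp(−2πδ²/s²)/f_s(L_q) > (1/(δ√(2πe)))·E_q(δ√(4π))², where L_q := ∪_{z∈ℤ}((z,z) + qℤ²), E(r) := 1 − 2exp(−πr²/2), and E_q(s) := √(E(q/s)·E(s)). -/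
noncomputable section

/-!
Parametrize `L_q` by `(k, a) ↦ (a, a + qk)` and complete the square,
`a² + (a + qk)² = 2(a + qk/2)² + q²k²/2`: then `f_s(L_q)` is a sum over `k` of
`exp(-π q²k²/(2s²))` times a theta sum in `a` shifted by `qk/2`. By Poisson summation a shifted
theta sum has the same Fourier side as the unshifted one up to phases, so it is no larger; Poisson
summation once more gives `θ(2/s²) = (s/√2) θ(s²/2)`, and `θ(r²/2) < 1/E(r)` by comparison with a
geometric series. Hence `f_s(L_q) < (s/√2) / (E(q/s) E(s))`, and at `s = δ√(4π)` we have
`exp(-2πδ²/s²) = e^{-1/2}` and `s/√2 = δ√(2π)`.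
-/

open Real

def gaussTheta (a : ℝ) : ℝ := ∑' n : ℤ, rexp (-π * a * n ^ 2)

lemma summable_exp_neg_pi_mul_add_sq {a : ℝ} (ha : 0 < a) (t : ℝ) :
    Summable fun n : ℤ => rexp (-π * a * (n + t) ^ 2) := by
  have h := ((summable_jacobiTheta₂_term_iff (Complex.I * a * t) (Complex.I * a)).mpr
    (by simpa using ha)).norm
  refine (h.mul_left (rexp (-π * a * t ^ 2))).congr fun n => ?_
  rw [norm_jacobiTheta₂_term, ← Real.exp_add]
  congr 1
  simp only [neg_mul, Complex.mul_im, Complex.I_re, Complex.ofReal_im, mul_zero, Complex.I_im,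
    Complex.ofReal_re, one_mul, zero_add, Complex.mul_re, zero_mul, sub_self]
  ring

lemma summable_exp_neg_pi_mul_int_sq {a : ℝ} (ha : 0 < a) :
    Summable fun n : ℤ => rexp (-π * a * n ^ 2) := by
  simpa only [add_zero] using summable_exp_neg_pi_mul_add_sq ha 0

lemma ofReal_tsum_exp_neg_pi_mul_add_sq {a : ℝ} (ha : 0 < a) (t : ℝ) :
    ((∑' n : ℤ, rexp (-π * a * (n + t) ^ 2) : ℝ) : ℂ) = 1 / (a : ℂ) ^ (1 / 2 : ℂ) *
      ∑' n : ℤ, rexp (-π / a * n ^ 2) * Complex.exp ((2 * π * t * n : ℝ) * Complex.I) := by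
  set C : ℝ := rexp (π * a * t ^ 2) with hC
  have hpoisson := Complex.tsum_exp_neg_quadratic (a := a) (by simpa using ha) (-(a * t))
  have hlhs : ∑' n : ℤ, Complex.exp (-π * a * n ^ 2 + 2 * π * (-(a * t) : ℂ) * n) =
      C * ∑' n : ℤ, (rexp (-π * a * (n + t) ^ 2) : ℂ) := by
    rw [← tsum_mul_left]
    congr 1 with n
    push_cast [hC]
    rw [← Complex.exp_add]
    congr 1
    ring
  have hrhs (n : ℤ) : Complex.exp (-π / a * (n + Complex.I * (-(a * t) : ℂ)) ^ 2) =
      C * (rexp (-π / a * n ^ 2) * Complex.exp ((2 * π * t * n : ℝ) * Complex.I)) := by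
    have : (a : ℂ) ≠ 0 := by exact_mod_cast ha.ne'
    push_cast [hC]
    rw [← Complex.exp_add, ← Complex.exp_add]
    congr 1
    field_simp
    ring_nf
    rw [Complex.I_sq]
    ring
  simp_rw [hrhs, tsum_mul_left, hlhs, mul_left_comm _ (C : ℂ)] at hpoisson
  rw [Complex.ofReal_tsum]
  exact mul_left_cancel₀ (Complex.ofReal_ne_zero.mpr (exp_pos _).ne') hpoisson

lemma tsum_exp_neg_pi_mul_add_sq_le {a : ℝ} (ha : 0 < a) (t : ℝ) :
    ∑' n : ℤ, rexp (-π * a * (n + t) ^ 2) ≤ gaussTheta a := by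
  have hterm (n : ℤ) :
      ‖(rexp (-π / a * n ^ 2) * Complex.exp ((2 * π * t * n : ℝ) * Complex.I) : ℂ)‖ =
        rexp (-π / a * n ^ 2) := by
    rw [norm_mul, Complex.norm_exp_ofReal_mul_I, Complex.norm_real,
      Real.norm_of_nonneg (exp_pos _).le, mul_one]
  have hsum : Summable fun n : ℤ => rexp (-π / a * n ^ 2) := by
    simpa only [neg_mul, div_eq_mul_inv] using summable_exp_neg_pi_mul_int_sq (inv_pos.mpr ha)
  have hroot : ‖1 / (a : ℂ) ^ (1 / 2 : ℂ)‖ = 1 / a ^ (1 / 2 : ℝ) := by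
    rw [norm_div, norm_one, Complex.norm_cpow_eq_rpow_re_of_pos ha]
    norm_num
  have h := congrArg norm (ofReal_tsum_exp_neg_pi_mul_add_sq ha t)
  rw [Complex.norm_real, Real.norm_of_nonneg (tsum_nonneg fun _ => (exp_pos _).le), norm_mul,
    hroot] at h
  rw [h, gaussTheta, Real.tsum_exp_neg_mul_int_sq ha]
  gcongr
  exact (norm_tsum_le_tsum_norm (hsum.congr fun n => (hterm n).symm)).trans_eq (tsum_congr hterm)

lemma gaussTheta_nonneg (a : ℝ) : 0 ≤ gaussTheta a :=
  tsum_nonneg fun _ => (exp_pos _).le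

lemma hasSum_int_pow_natAbs {x : ℝ} (h0 : 0 ≤ x) (h1 : x < 1) :
    HasSum (fun n : ℤ => x ^ n.natAbs) ((1 + x) / (1 - x)) := by
  have hgeom := hasSum_geometric_of_lt_one h0 h1
  have hpos : HasSum (fun n : ℕ => x ^ (n : ℤ).natAbs) (1 - x)⁻¹ := by
    simpa only [Int.natAbs_natCast] using hgeom
  have hneg : HasSum (fun n : ℕ => x ^ (-((n : ℤ) + 1)).natAbs) (x * (1 - x)⁻¹) := by
    refine (hgeom.mul_left x).congr_fun fun n => ?_
    rw [Int.natAbs_neg, ← Nat.cast_one, ← Nat.cast_add, Int.natAbs_natCast, pow_succ']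
  have h := HasSum.of_nat_of_neg_add_one (f := fun n : ℤ => x ^ n.natAbs) hpos hneg
  rwa [← one_add_mul, ← div_eq_mul_inv] at h

lemma gaussTheta_lt {a : ℝ} (ha : 0 < a) (h : 2 * rexp (-π * a) < 1) :
    gaussTheta a < 1 / (1 - 2 * rexp (-π * a)) := by
  set x := rexp (-π * a)
  have hx0 : 0 < x := exp_pos _
  have hterm : ∀ n : ℤ, rexp (-π * a * n ^ 2) ≤ x ^ n.natAbs := by
    intro n
    rw [← Real.exp_nat_mul, Real.exp_le_exp, mul_comm]
    have hn : ((n.natAbs : ℤ) : ℝ) ≤ ((n ^ 2 : ℤ) : ℝ) := Int.cast_le.mpr (Int.natAbs_le_self_sq n)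
    rw [Int.cast_natCast, Int.cast_pow] at hn
    nlinarith [mul_le_mul_of_nonneg_right hn (mul_pos pi_pos ha).le]
  have hgeom := hasSum_int_pow_natAbs hx0.le (by linarith)
  calc gaussTheta a ≤ (1 + x) / (1 - x) :=
        hgeom.tsum_eq ▸ Summable.tsum_le_tsum hterm (summable_exp_neg_pi_mul_int_sq ha) hgeom.summable
    _ < 1 / (1 - 2 * x) := by
        rw [div_lt_div_iff₀ (by linarith) (by linarith)]
        nlinarith

lemma gaussTheta_inv {a : ℝ} (ha : 0 < a) : gaussTheta a⁻¹ = √a * gaussTheta a := by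
  rw [gaussTheta, gaussTheta, Real.tsum_exp_neg_mul_int_sq (inv_pos.mpr ha), div_inv_eq_mul,
    ← Real.sqrt_eq_rpow, Real.sqrt_inv, one_div, inv_inv]

lemma Eg_pos_iff {r : ℝ} : 0 < Eg r ↔ Real.log 4 < π * r ^ 2 := by
  have hlog4 : Real.log 4 = 2 * Real.log 2 := by
    rw [show (4 : ℝ) = 2 ^ 2 by norm_num, Real.log_pow, Nat.cast_ofNat]
  have h2 (y : ℝ) : 2 * rexp y = rexp (Real.log 2 + y) := by
    rw [Real.exp_add, Real.exp_log two_pos]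
  rw [Eg, sub_pos, h2, Real.exp_lt_one_iff, hlog4]
  constructor <;> intro h <;> linarith

lemma Eg_le_Eg_of_sq_le {r r' : ℝ} (h : r ^ 2 ≤ r' ^ 2) : Eg r ≤ Eg r' := by
  unfold Eg
  gcongr

lemma Eg_mul_sqrt_four_pi_pos {δ : ℝ} (hδ : √(Real.log 4) / (2 * π) < δ) :
    0 < Eg (δ * √(4 * π)) := by
  have hδ0 : 0 < δ := lt_of_le_of_lt (by positivity) hδ
  have hδ' := (Real.sqrt_lt' (by positivity)).mp ((div_lt_iff₀ (by positivity)).mp hδ)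
  rw [Eg_pos_iff, mul_pow, Real.sq_sqrt (by positivity)]
  linarith

lemma ne_zero_of_Eg_div_pos {q : ℕ} {s : ℝ} (h : 0 < Eg (q / s)) : q ≠ 0 := by
  rintro rfl
  norm_num [Eg] at h

lemma gaussTheta_lt_inv_Eg {r : ℝ} (hr : 0 < Eg r) : gaussTheta (r ^ 2 / 2) < 1 / Eg r := by
  have hr0 : r ≠ 0 := by
    rintro rfl
    norm_num [Eg] at hr
  have hEg : Eg r = 1 - 2 * rexp (-π * (r ^ 2 / 2)) := by
    rw [Eg]
    ring_nf
  rw [hEg] at hr ⊢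
  exact gaussTheta_lt (by positivity) (by linarith)

def lqParam (q : ℕ) (p : ℤ × ℤ) : LqSet q :=
  ⟨(p.2, p.2 + q * p.1), p.2, 0, p.1, by simp, by simp⟩

lemma lqParam_bijective {q : ℕ} (hq : q ≠ 0) : Function.Bijective (lqParam q) := by
  have hq' : (q : ℝ) ≠ 0 := by exact_mod_cast hq
  constructor
  · rintro ⟨k, a⟩ ⟨k', a'⟩ h
    simp only [lqParam, Subtype.ext_iff, Prod.ext_iff, Int.cast_inj] at h
    obtain ⟨rfl, h⟩ := h
    simp_all
  · rintro ⟨v, z, w₁, w₂, h₁, h₂⟩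
    refine ⟨(w₂ - w₁, z + q * w₁), Subtype.ext (Prod.ext ?_ ?_)⟩ <;>
      simp only [lqParam, h₁, h₂] <;> push_cast <;> ring

section Lattice

variable {q : ℕ} {s : ℝ}

lemma fsLq_gauss_eq_tsum (hq : q ≠ 0) :
    fsLq gauss s q = ∑' p : ℤ × ℤ, gauss (p.2 / s) * gauss ((p.2 + q * p.1) / s) := by
  rw [fsLq, ← (Equiv.ofBijective _ (lqParam_bijective hq)).tsum_eq]
  rfl

lemma gauss_div_mul_gauss_div (hs : s ≠ 0) (a b c : ℝ) :
    gauss (a / s) * gauss ((a + b * c) / s) =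
      rexp (-π * ((b / s) ^ 2 / 2) * c ^ 2) * rexp (-π * (s ^ 2 / 2)⁻¹ * (a + b * c / 2) ^ 2) := by
  rw [gauss, gauss, ← Real.exp_add, ← Real.exp_add]
  congr 1
  field_simp
  ring

lemma summable_gauss_fiber (hs : s ≠ 0) (b c : ℝ) :
    Summable fun a : ℤ => gauss (a / s) * gauss ((a + b * c) / s) := by
  simp_rw [gauss_div_mul_gauss_div hs]
  exact (summable_exp_neg_pi_mul_add_sq (by positivity) _).mul_left _

lemma tsum_gauss_fiber_le (hs : s ≠ 0) (b c : ℝ) :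
    ∑' a : ℤ, gauss (a / s) * gauss ((a + b * c) / s) ≤
      rexp (-π * ((b / s) ^ 2 / 2) * c ^ 2) * gaussTheta (s ^ 2 / 2)⁻¹ := by
  simp_rw [gauss_div_mul_gauss_div hs, tsum_mul_left]
  gcongr
  exact tsum_exp_neg_pi_mul_add_sq_le (by positivity) _

lemma summable_gauss_lattice (hq : q ≠ 0) (hs : s ≠ 0) :
    Summable fun p : ℤ × ℤ => gauss (p.2 / s) * gauss ((p.2 + q * p.1) / s) := by
  refine (summable_prod_of_nonneg fun p => by unfold gauss; positivity).mpr
    ⟨fun k => summable_gauss_fiber hs q k, ?_⟩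
  refine Summable.of_nonneg_of_le (fun k => tsum_nonneg fun a => by unfold gauss; positivity)
    (fun k => tsum_gauss_fiber_le hs q k) (Summable.mul_right _ ?_)
  have hq' : (q : ℝ) ≠ 0 := by exact_mod_cast hq
  exact summable_exp_neg_pi_mul_int_sq (by positivity)

lemma fsLq_gauss_pos (hq : q ≠ 0) (hs : s ≠ 0) : 0 < fsLq gauss s q := by
  rw [fsLq_gauss_eq_tsum hq]
  exact (summable_gauss_lattice hq hs).tsum_pos (fun p => by unfold gauss; positivity) 0
    (by unfold gauss; positivity)

lemma fsLq_gauss_le (hq : q ≠ 0) (hs : s ≠ 0) :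
    fsLq gauss s q ≤ gaussTheta ((q / s) ^ 2 / 2) * gaussTheta (s ^ 2 / 2)⁻¹ := by
  have hq' : (q : ℝ) ≠ 0 := by exact_mod_cast hq
  have hsum := summable_gauss_lattice hq hs
  rw [fsLq_gauss_eq_tsum hq, hsum.tsum_prod' fun k => summable_gauss_fiber hs q k, gaussTheta,
    ← tsum_mul_right]
  exact Summable.tsum_le_tsum (fun k => tsum_gauss_fiber_le hs q k) hsum.prod
    ((summable_exp_neg_pi_mul_int_sq (by positivity)).mul_right _)

lemma fsLq_gauss_lt (hs : 0 < s) (hEs : 0 < Eg s) (hEqs : 0 < Eg (q / s)) :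
    fsLq gauss s q < s / √2 / (Eg (q / s) * Eg s) := by
  have hq := ne_zero_of_Eg_div_pos hEqs
  have hsqrt : √(s ^ 2 / 2) = s / √2 := by rw [Real.sqrt_div' _ two_pos.le, Real.sqrt_sq hs.le]
  calc fsLq gauss s q ≤ gaussTheta ((q / s) ^ 2 / 2) * gaussTheta (s ^ 2 / 2)⁻¹ :=
        fsLq_gauss_le hq hs.ne'
    _ = gaussTheta ((q / s) ^ 2 / 2) * (s / √2 * gaussTheta (s ^ 2 / 2)) := by
        rw [gaussTheta_inv (by positivity), hsqrt]
    _ < 1 / Eg (q / s) * (s / √2 * (1 / Eg s)) :=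
        mul_lt_mul'' (gaussTheta_lt_inv_Eg hEqs)
          (mul_lt_mul_of_pos_left (gaussTheta_lt_inv_Eg hEs) (by positivity))
          (gaussTheta_nonneg _) (mul_nonneg (by positivity) (gaussTheta_nonneg _))
    _ = s / √2 / (Eg (q / s) * Eg s) := by field_simp

end Lattice

theorem worst_case_ell2_rate_general (δ : ℝ) (hδ : Real.sqrt (Real.log 4) / (2 * Real.pi) < δ)
    (q : ℕ) (hq₂ : 4 * Real.pi * δ ^ 2 ≤ (q : ℝ))
    (s : ℝ) (hs : s = δ * Real.sqrt (4 * Real.pi)) :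
    Real.exp (-(2 * Real.pi * δ ^ 2) / s ^ 2) / fsLq gauss s q >
      1 / (δ * Real.sqrt (2 * Real.pi * Real.exp 1)) * Egq q (δ * Real.sqrt (4 * Real.pi)) ^ 2 := by
  have hδ0 : 0 < δ := lt_of_le_of_lt (by positivity) hδ
  have hs0 : 0 < s := by rw [hs]; positivity
  have hs2 : s ^ 2 = 4 * π * δ ^ 2 := by
    rw [hs, mul_pow, Real.sq_sqrt (by positivity)]
    ring
  have hEs : 0 < Eg s := hs ▸ Eg_mul_sqrt_four_pi_pos hδ
  have hEqs : 0 < Eg (q / s) := by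
    refine hEs.trans_le (Eg_le_Eg_of_sq_le ?_)
    have hsq : s ^ 2 ≤ q := hs2 ▸ hq₂
    rw [div_pow, le_div_iff₀ (by positivity)]
    nlinarith [sq_nonneg s]
  have hscale : δ * √(2 * π * rexp 1) = s / √2 * rexp (1 / 2) := by
    rw [hs, Real.exp_half, Real.sqrt_mul (by positivity) (rexp 1), show 4 * π = 2 * (2 * π) by ring,
      Real.sqrt_mul zero_le_two (2 * π)]
    field_simp
  rw [← hs, Egq, Real.sq_sqrt (mul_pos hEqs hEs).le, hscale, gt_iff_lt,
    lt_div_iff₀ (fsLq_gauss_pos (ne_zero_of_Eg_div_pos hEqs) hs0.ne')]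
  calc 1 / (s / √2 * rexp (1 / 2)) * (Eg (q / s) * Eg s) * fsLq gauss s q
      < 1 / (s / √2 * rexp (1 / 2)) * (Eg (q / s) * Eg s) * (s / √2 / (Eg (q / s) * Eg s)) := by
        gcongr
        exact fsLq_gauss_lt hs0 hEs hEqs
    _ = rexp (-(2 * π * δ ^ 2) / s ^ 2) := by
        rw [hs2, show -(2 * π * δ ^ 2) / (4 * π * δ ^ 2) = -(1 / 2) by field_simp; ring, Real.exp_neg]
        field_simp

/-- Worst-case ℓ₂ rate bound at the optimal scaling `s = δ√(4π)`: for
`δ > √(ln 4)/(2π)` and prime `q ≥ 4πδ²`,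
`W^(2)_{q,δ}(s)² = exp(−2πδ²/s²)/f_s(L_q) > (1/(δ√(2πe)))·E_q(δ√(4π))²`. -/
theorem worst_case_ell2_rate (δ : ℝ) (hδ : Real.sqrt (Real.log 4) / (2 * Real.pi) < δ)
    (q : ℕ) (hq : Nat.Prime q) (hq₂ : 4 * Real.pi * δ ^ 2 ≤ (q : ℝ))
    (s : ℝ) (hs : s = δ * Real.sqrt (4 * Real.pi)) :
    Real.exp (-(2 * Real.pi * δ ^ 2) / s ^ 2) / fsLq gauss s q >
      1 / (δ * Real.sqrt (2 * Real.pi * Real.exp 1)) * Egq q (δ * Real.sqrt (4 * Real.pi)) ^ 2 :=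
  worst_case_ell2_rate_general δ hδ q hq₂ s hs
end
end
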